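/- arXiv:2502.10114 — 3 statements merged into one kernel-verified Lean document; each statement's English description precedes it below -/
import Mathlib

section
/- Define H_Λ(σ) = ∑_{j=1}^{|Λ|} [ b_j(σ) ln(θ/j) − ln(b_j(σ)!) ] for a finite set Λ, σ : Λ → ℤ, θ > 0. Let v ∉ Λ, Δ = Λ ∪ {v}, and σ : Δ → ℤ with σ(v) = σ(x₀) for some x₀ ∈ Λ; set i₀ = |{x ∈ Λ : σ(x) = σ(v)}|. Then H_Δ(σ) = ln( i₀ · b_{i₀}(σ_Λ) / ((i₀+1)(b_{i₀+1}(σ_Λ)+1)) ) + H_Λ(σ_Λ). -/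
open Finset

/-- `b_j(σ)`: the number of integer values attained by `σ` exactly `j` times on `Λ`. -/
def bcount {V : Type*} [DecidableEq V] (Λ : Finset V) (σ : V → ℤ) (j : ℕ) : ℕ :=
  ((Λ.image σ).filter fun z => (Λ.filter fun x => σ x = z).card = j).card

/-- The Ewens Hamiltonian `H_Λ(σ) = ∑_{j=1}^{|Λ|} [b_j(σ) ln(θ/j) − ln(b_j(σ)!)]`. -/
noncomputable def ham {V : Type*} [DecidableEq V] (θ : ℝ) (Λ : Finset V) (σ : V → ℤ) : ℝ :=
  ∑ j ∈ Finset.Icc 1 Λ.card,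
    ((bcount Λ σ j : ℝ) * Real.log (θ / j) - Real.log (bcount Λ σ j).factorial)

/-- If `σ(v)` is already attained on `Λ` with multiplicity `i₀`, then
`H_Δ(σ) = ln(i₀·b_{i₀}(σ_Λ)/((i₀+1)(b_{i₀+1}(σ_Λ)+1))) + H_Λ(σ_Λ)`. -/
theorem ham_insert_old_value {V : Type*} [DecidableEq V] (θ : ℝ) (hθ : 0 < θ)
    (Λ : Finset V) (v : V) (hv : v ∉ Λ) (σ : V → ℤ) (hold : ∃ x₀ ∈ Λ, σ x₀ = σ v)
    (i₀ : ℕ) (hi₀ : i₀ = (Λ.filter fun x => σ x = σ v).card) :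
    ham θ (insert v Λ) σ =
      Real.log ((i₀ * bcount Λ σ i₀ : ℝ) / ((i₀ + 1) * (bcount Λ σ (i₀ + 1) + 1)))
        + ham θ Λ σ := by
  obtain ⟨x₀, hx₀, hx₀v⟩ := hold
  have hmultΛ : (Λ.filter fun x => σ x = σ v).card = i₀ := hi₀.symm
  have hi₀pos : 1 ≤ i₀ := by
    rw [hi₀]
    exact Finset.card_pos.2 ⟨x₀, Finset.mem_filter.2 ⟨hx₀, hx₀v⟩⟩
  have hi₀le : i₀ ≤ Λ.card := by
    rw [hi₀]; exact Finset.card_filter_le _ _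
  have hz₀mem : σ v ∈ Λ.image σ := Finset.mem_image.2 ⟨x₀, hx₀, hx₀v⟩
  have hmultΔ : ∀ z, ((insert v Λ).filter fun x => σ x = z).card =
      if z = σ v then (Λ.filter fun x => σ x = z).card + 1
      else (Λ.filter fun x => σ x = z).card := by
    intro z
    rw [Finset.filter_insert]
    by_cases h : σ v = z
    · rw [if_pos h, if_pos h.symm,
        Finset.card_insert_of_notMem (fun hm => hv (Finset.mem_filter.1 hm).1)]
    · rw [if_neg h, if_neg (fun h' => h h'.symm)]
  have himg : (insert v Λ).image σ = Λ.image σ := by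
    rw [Finset.image_insert, Finset.insert_eq_self.2 hz₀mem]
  have hbpos : 1 ≤ bcount Λ σ i₀ := by
    unfold bcount
    exact Finset.card_pos.2 ⟨σ v, Finset.mem_filter.2 ⟨hz₀mem, hmultΛ⟩⟩
  have hb_other : ∀ j, j ≠ i₀ → j ≠ i₀ + 1 →
      bcount (insert v Λ) σ j = bcount Λ σ j := by
    intro j hj1 hj2
    unfold bcount
    rw [himg]
    congr 1
    apply Finset.filter_congr
    intro z hz
    rw [hmultΔ z]
    by_cases h : z = σ v
    · subst h
      rw [if_pos rfl, hmultΛ]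
      constructor <;> intro hh <;> omega
    · rw [if_neg h]
  have hb_i0 : bcount (insert v Λ) σ i₀ = bcount Λ σ i₀ - 1 := by
    unfold bcount
    rw [himg]
    have hset : ((Λ.image σ).filter fun z => ((insert v Λ).filter fun x => σ x = z).card = i₀)
        = ((Λ.image σ).filter fun z => (Λ.filter fun x => σ x = z).card = i₀).erase (σ v) := by
      ext z
      simp only [Finset.mem_erase, Finset.mem_filter, hmultΔ z]
      by_cases h : z = σ v
      · subst h
        rw [if_pos rfl, hmultΛ]
        constructor
        · rintro ⟨-, hh⟩; omega
        · rintro ⟨hh, -⟩; exact absurd rfl hh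
      · rw [if_neg h]
        tauto
    rw [hset, Finset.card_erase_of_mem (Finset.mem_filter.2 ⟨hz₀mem, hmultΛ⟩)]
  have hb_i1 : bcount (insert v Λ) σ (i₀ + 1) = bcount Λ σ (i₀ + 1) + 1 := by
    unfold bcount
    rw [himg]
    have hset : ((Λ.image σ).filter fun z => ((insert v Λ).filter fun x => σ x = z).card = i₀ + 1)
        = insert (σ v)
            ((Λ.image σ).filter fun z => (Λ.filter fun x => σ x = z).card = i₀ + 1) := by
      ext z
      simp only [Finset.mem_insert, Finset.mem_filter, hmultΔ z]
      by_cases h : z = σ v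
      · subst h
        rw [if_pos rfl, hmultΛ]
        simp [hz₀mem]
      · rw [if_neg h]
        tauto
    rw [hset, Finset.card_insert_of_notMem]
    intro hmem
    have := (Finset.mem_filter.1 hmem).2
    rw [hmultΛ] at this
    omega
  have hcardΔ : (insert v Λ).card = Λ.card + 1 := Finset.card_insert_of_notMem hv
  have hbig : bcount Λ σ (Λ.card + 1) = 0 := by
    unfold bcount
    rw [Finset.card_eq_zero, Finset.filter_eq_empty_iff]
    intro z hz
    have := Finset.card_filter_le Λ (fun x => σ x = z)
    omega
  have hsumG : ham θ Λ σ = ∑ j ∈ Finset.Icc 1 (Λ.card + 1),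
      ((bcount Λ σ j : ℝ) * Real.log (θ / j) - Real.log (bcount Λ σ j).factorial) := by
    rw [ham, Finset.sum_Icc_succ_top (by omega : 1 ≤ Λ.card + 1), hbig]
    simp
  rw [ham, hcardΔ, hsumG]
  apply eq_add_of_sub_eq
  rw [← Finset.sum_sub_distrib]
  have hsub : ({i₀, i₀ + 1} : Finset ℕ) ⊆ Finset.Icc 1 (Λ.card + 1) := by
    intro j hj
    simp only [Finset.mem_insert, Finset.mem_singleton] at hj
    rcases hj with rfl | rfl <;> rw [Finset.mem_Icc] <;> omega
  rw [← Finset.sum_subset hsub (by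
    intro j hj hj2
    simp only [Finset.mem_insert, Finset.mem_singleton, not_or] at hj2
    rw [hb_other j hj2.1 hj2.2]
    ring)]
  rw [Finset.sum_pair (by omega : i₀ ≠ i₀ + 1), hb_i0, hb_i1]
  -- now a pure real-log computation
  obtain ⟨b, hbeq⟩ : ∃ b, bcount Λ σ i₀ = b + 1 := ⟨bcount Λ σ i₀ - 1, by omega⟩
  set c := bcount Λ σ (i₀ + 1) with hc
  rw [hbeq]
  have hi₀R : (0:ℝ) < (i₀ : ℝ) := by exact_mod_cast hi₀pos
  have hfac : ∀ n : ℕ, (0:ℝ) < (n.factorial : ℝ) := fun n => by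
    exact_mod_cast n.factorial_pos
  have hlog1 : Real.log (θ / (i₀ : ℝ)) = Real.log θ - Real.log i₀ :=
    Real.log_div hθ.ne' hi₀R.ne'
  have hlog2 : Real.log (θ / ((i₀ : ℝ) + 1)) = Real.log θ - Real.log ((i₀ : ℝ) + 1) :=
    Real.log_div hθ.ne' (by positivity)
  have hfb : Real.log ((b + 1).factorial : ℝ) =
      Real.log ((b : ℝ) + 1) + Real.log (b.factorial : ℝ) := by
    rw [Nat.factorial_succ]
    push_cast
    rw [Real.log_mul (by positivity) (hfac b).ne']
  have hfc : Real.log ((c + 1).factorial : ℝ) =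
      Real.log ((c : ℝ) + 1) + Real.log (c.factorial : ℝ) := by
    rw [Nat.factorial_succ]
    push_cast
    rw [Real.log_mul (by positivity) (hfac c).ne']
  have hrhs : Real.log ((i₀ * (b + 1) : ℝ) / ((i₀ + 1) * (c + 1))) =
      Real.log (i₀ : ℝ) + Real.log ((b : ℝ) + 1)
        - (Real.log ((i₀ : ℝ) + 1) + Real.log ((c : ℝ) + 1)) := by
    rw [Real.log_div (by positivity) (by positivity),
      Real.log_mul hi₀R.ne' (by positivity),
      Real.log_mul (by positivity) (by positivity)]
  push_cast
  rw [hlog1, hlog2, hfb, hfc]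
  push_cast at hrhs ⊢
  rw [hrhs]
  ring
end

section
/- The family of Hamiltonians H = {H_Λ} is additive: for finite sets Λ ⊂ Δ of vertices and any σ : Δ → ℤ, the difference H_Δ(σ) − H_Λ(σ_Λ) depends only on the multiplicity counts b_j(σ_Λ) and the multiplicities in Λ of the values σ takes on Δ ∖ Λ; in particular, when Δ = Λ ∪ {v}, H_Δ(σ) − H_Λ(σ_Λ) equals ln(θ/(b_1(σ_Λ)+1)) if σ(v) is not attained on Λ, and equals ln(i₀ b_{i₀}(σ_Λ)/((i₀+1)(b_{i₀+1}(σ_Λ)+1))) with i₀ the multiplicity of σ(v) in σ_Λ otherwise. -/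
open Finset

lemma bcount_eq_zero {V : Type*} [DecidableEq V] (Λ : Finset V) (σ : V → ℤ) (j : ℕ)
    (hj : Λ.card < j) : bcount Λ σ j = 0 := by
  unfold bcount
  rw [Finset.card_eq_zero, Finset.filter_eq_empty_iff]
  intro z hz h
  have := Finset.card_filter_le Λ (fun x => σ x = z)
  omega

lemma mult_insert {V : Type*} [DecidableEq V] (Λ : Finset V) (v : V) (hv : v ∉ Λ)
    (σ : V → ℤ) (z : ℤ) :
    ((insert v Λ).filter fun x => σ x = z).card
      = (Λ.filter fun x => σ x = z).card + if σ v = z then 1 else 0 := by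
  rw [Finset.filter_insert]
  split
  · rw [Finset.card_insert_of_notMem (fun h => hv (Finset.mem_of_mem_filter v h))]
  · simp [*]

lemma bcount_insert {V : Type*} [DecidableEq V] (Λ : Finset V) (v : V) (hv : v ∉ Λ)
    (σ : V → ℤ) (j : ℕ) (hj : 1 ≤ j) :
    bcount (insert v Λ) σ j
      + (if (Λ.filter fun x => σ x = σ v).card = j then 1 else 0)
      = bcount Λ σ j
      + (if (Λ.filter fun x => σ x = σ v).card + 1 = j then 1 else 0) := by
  classical
  unfold bcount
  have himg : (insert v Λ).image σ = insert (σ v) (Λ.image σ) := Finset.image_insert σ v Λ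
  have hfilter : ∀ (S : Finset ℤ),
      (S.filter fun z => ((insert v Λ).filter fun x => σ x = z).card = j)
        = S.filter fun z =>
            (Λ.filter fun x => σ x = z).card + (if σ v = z then 1 else 0) = j := by
    intro S
    apply Finset.filter_congr
    intro z _
    rw [mult_insert Λ v hv σ z]
  rw [himg, hfilter]
  by_cases hz : σ v ∈ Λ.image σ
  · set S := (Λ.image σ).erase (σ v) with hSdef
    have hS1 : Λ.image σ = insert (σ v) S := (Finset.insert_erase hz).symm
    have hnot : σ v ∉ S := Finset.notMem_erase _ _
    have hins : insert (σ v) (Λ.image σ) = Λ.image σ := Finset.insert_eq_self.2 hz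
    have hSf : (S.filter fun z =>
          (Λ.filter fun x => σ x = z).card + (if σ v = z then 1 else 0) = j)
        = S.filter fun z => (Λ.filter fun x => σ x = z).card = j := by
      apply Finset.filter_congr
      intro z hz'
      rw [if_neg (fun h => (Finset.ne_of_mem_erase hz') h.symm), add_zero]
    rw [hins, hS1, Finset.filter_insert, Finset.filter_insert, hSf]
    have hite : (if σ v = σ v then 1 else 0) = 1 := if_pos rfl
    rw [hite]
    set F := S.filter fun z => (Λ.filter fun x => σ x = z).card = j with hF
    have hnotF : σ v ∉ F := fun h => hnot (Finset.mem_of_mem_filter (σ v) h)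
    have hc : (insert (σ v) F).card = F.card + 1 := Finset.card_insert_of_notMem hnotF
    split_ifs <;> omega
  · have hi : (Λ.filter fun x => σ x = σ v).card = 0 := by
      rw [Finset.card_eq_zero, Finset.filter_eq_empty_iff]
      intro x hx h
      exact hz (Finset.mem_image.2 ⟨x, hx, h⟩)
    have hSf : ((Λ.image σ).filter fun z =>
          (Λ.filter fun x => σ x = z).card + (if σ v = z then 1 else 0) = j)
        = (Λ.image σ).filter fun z => (Λ.filter fun x => σ x = z).card = j := by
      apply Finset.filter_congr
      intro z hz'
      rw [if_neg (fun h : σ v = z => hz (h ▸ hz')), add_zero]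
    rw [Finset.filter_insert, hSf, hi]
    have hite : (if σ v = σ v then 1 else 0) = 1 := if_pos rfl
    rw [hite]
    set F := (Λ.image σ).filter fun z => (Λ.filter fun x => σ x = z).card = j with hF
    have hnotF : σ v ∉ F := fun h => hz (Finset.mem_of_mem_filter (σ v) h)
    have hc : (insert (σ v) F).card = F.card + 1 := Finset.card_insert_of_notMem hnotF
    split_ifs <;> omega

lemma ham_diff {V : Type*} [DecidableEq V] (θ : ℝ) (Λ : Finset V) (v : V) (hv : v ∉ Λ)
    (σ : V → ℤ) :
    ham θ (insert v Λ) σ - ham θ Λ σ = ∑ j ∈ Finset.Icc 1 (Λ.card + 1),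
      (((bcount (insert v Λ) σ j : ℝ) * Real.log (θ / j)
          - Real.log (bcount (insert v Λ) σ j).factorial)
        - ((bcount Λ σ j : ℝ) * Real.log (θ / j)
          - Real.log (bcount Λ σ j).factorial)) := by
  unfold ham
  rw [Finset.card_insert_of_notMem hv]
  have hext : (∑ j ∈ Finset.Icc 1 Λ.card,
      ((bcount Λ σ j : ℝ) * Real.log (θ / j) - Real.log (bcount Λ σ j).factorial))
      = ∑ j ∈ Finset.Icc 1 (Λ.card + 1),
      ((bcount Λ σ j : ℝ) * Real.log (θ / j) - Real.log (bcount Λ σ j).factorial) := by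
    rw [Finset.sum_Icc_succ_top (by omega)]
    rw [bcount_eq_zero Λ σ _ (Nat.lt_succ_self _)]
    simp
  rw [hext, ← Finset.sum_sub_distrib]

/-- Additivity of the Ewens Hamiltonians for `Δ = Λ ∪ {v}`: the difference
`H_Δ(σ) − H_Λ(σ_Λ)` equals `ln(θ/(b_1(σ_Λ)+1))` if `σ(v)` is a new value, and
`ln(i₀ b_{i₀}(σ_Λ)/((i₀+1)(b_{i₀+1}(σ_Λ)+1)))` if `σ(v)` has multiplicity `i₀ ≥ 1`
on `Λ`. -/
theorem ham_additive {V : Type*} [DecidableEq V] (θ : ℝ) (hθ : 0 < θ)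
    (Λ : Finset V) (v : V) (hv : v ∉ Λ) (σ : V → ℤ) :
    ((∀ x ∈ Λ, σ x ≠ σ v) →
        ham θ (insert v Λ) σ - ham θ Λ σ = Real.log (θ / (bcount Λ σ 1 + 1))) ∧
    ((∃ x₀ ∈ Λ, σ x₀ = σ v) →
        ∀ i₀ : ℕ, i₀ = (Λ.filter fun x => σ x = σ v).card →
          ham θ (insert v Λ) σ - ham θ Λ σ =
            Real.log ((i₀ * bcount Λ σ i₀ : ℝ) /
              ((i₀ + 1) * (bcount Λ σ (i₀ + 1) + 1)))) := by
  constructor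
  · intro hnew
    have hi : (Λ.filter fun x => σ x = σ v).card = 0 := by
      rw [Finset.card_eq_zero, Finset.filter_eq_empty_iff]
      exact fun x hx => hnew x hx
    have key : ∀ j, 1 ≤ j → bcount (insert v Λ) σ j
        = bcount Λ σ j + if j = 1 then 1 else 0 := by
      intro j hj
      have h := bcount_insert Λ v hv σ j hj
      rw [hi] at h
      split_ifs at h ⊢ <;> omega
    rw [ham_diff θ Λ v hv σ]
    rw [Finset.sum_eq_single_of_mem 1 (by simp)]
    · have h1 : bcount (insert v Λ) σ 1 = bcount Λ σ 1 + 1 := by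
        have := key 1 le_rfl
        simpa using this
      have hb : (0:ℝ) < (bcount Λ σ 1 : ℝ) + 1 := by positivity
      rw [h1, Nat.factorial_succ]
      push_cast
      rw [Real.log_mul (by positivity) (by positivity),
          Real.log_div hθ.ne' hb.ne', div_one]
      ring
    · intro j hjm hj1
      have hj : 1 ≤ j := (Finset.mem_Icc.1 hjm).1
      have h := key j hj
      rw [if_neg hj1, add_zero] at h
      rw [h, sub_self]
  · rintro ⟨x₀, hx₀, hσ⟩ i₀ hi₀
    have hi1 : 1 ≤ i₀ := by
      rw [hi₀]
      exact Finset.card_pos.2 ⟨x₀, Finset.mem_filter.2 ⟨hx₀, hσ⟩⟩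
    have hiN : i₀ ≤ Λ.card := hi₀ ▸ Finset.card_filter_le _ _
    have hbpos : 1 ≤ bcount Λ σ i₀ :=
      Finset.card_pos.2 ⟨σ v, Finset.mem_filter.2
        ⟨Finset.mem_image.2 ⟨x₀, hx₀, hσ⟩, hi₀.symm⟩⟩
    have k1 : bcount (insert v Λ) σ i₀ + 1 = bcount Λ σ i₀ := by
      have h := bcount_insert Λ v hv σ i₀ hi1
      rw [← hi₀] at h
      split_ifs at h <;> omega
    have k2 : bcount (insert v Λ) σ (i₀ + 1) = bcount Λ σ (i₀ + 1) + 1 := by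
      have h := bcount_insert Λ v hv σ (i₀ + 1) (by omega)
      rw [← hi₀] at h
      split_ifs at h <;> omega
    have k3 : ∀ j, 1 ≤ j → j ≠ i₀ → j ≠ i₀ + 1 →
        bcount (insert v Λ) σ j = bcount Λ σ j := by
      intro j h1 h2 h3
      have h := bcount_insert Λ v hv σ j h1
      rw [← hi₀] at h
      split_ifs at h <;> omega
    rw [ham_diff θ Λ v hv σ]
    have hsub : ({i₀, i₀ + 1} : Finset ℕ) ⊆ Finset.Icc 1 (Λ.card + 1) := by
      intro j hj
      simp only [Finset.mem_insert, Finset.mem_singleton] at hj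
      simp only [Finset.mem_Icc]
      omega
    rw [← Finset.sum_subset hsub (by
      intro j hjm hjn
      simp only [Finset.mem_insert, Finset.mem_singleton, not_or] at hjn
      rw [k3 j (Finset.mem_Icc.1 hjm).1 hjn.1 hjn.2, sub_self])]
    rw [Finset.sum_pair (by omega : i₀ ≠ i₀ + 1)]
    rw [← k1, k2, Nat.factorial_succ, Nat.factorial_succ]
    have hc0 : (0:ℝ) < (i₀ : ℝ) := by exact_mod_cast hi1
    have hc1 : (0:ℝ) < (i₀ : ℝ) + 1 := by positivity
    have hB : (0:ℝ) < (bcount (insert v Λ) σ i₀ : ℝ) + 1 := by positivity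
    have hC : (0:ℝ) < (bcount Λ σ (i₀ + 1) : ℝ) + 1 := by positivity
    push_cast
    rw [Real.log_div (mul_pos hc0 hB).ne' (mul_pos hc1 hC).ne',
        Real.log_mul hc0.ne' hB.ne', Real.log_mul hc1.ne' hC.ne',
        Real.log_mul hB.ne' (by positivity), Real.log_mul hC.ne' (by positivity),
        Real.log_div hθ.ne' hc0.ne', Real.log_div hθ.ne' hc1.ne']
    ring
end

section
/- Ewens consistency via exponential difference: with Δ = Λ ∪ {v}, v ∉ Λ, and P_Λ, P_Δ the Ewens distributions, for any σ : Δ → ℤ one has P_Δ(σ)/P_Λ(σ_Λ) = (Z_{|Λ|}(θ)/Z_{|Δ|}(θ)) · exp(H_Δ(σ) − H_Λ(σ_Λ)), i.e. the ratio P_Δ(σ)/P_Λ(σ_Λ) equals ((|Λ|+1)/(|Λ|+θ)) · r where r = θ/(b_1(σ_Λ)+1) if σ(v) is a new value, and r = i₀ b_{i₀}(σ_Λ)/((i₀+1)(b_{i₀+1}(σ_Λ)+1)) if σ(v) has multiplicity i₀ ≥ 1 in σ_Λ. -/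
open Finset

/-- The Ewens normalizing constant `Z_n(θ) = θ(θ+1)⋯(θ+n−1)/n!`. -/
noncomputable def Zc (n : ℕ) (θ : ℝ) : ℝ :=
  (∏ k ∈ Finset.range n, (θ + k)) / n.factorial

/-- The Ewens probability `P_Λ(σ) = (1/Z_{|Λ|}(θ)) ∏_{j=1}^{|Λ|} (θ/j)^{b_j(σ)}/b_j(σ)!`. -/
noncomputable def Pmeas {V : Type*} [DecidableEq V] (θ : ℝ) (Λ : Finset V) (σ : V → ℤ) : ℝ :=
  (1 / Zc Λ.card θ) * ∏ j ∈ Finset.Icc 1 Λ.card,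
    (θ / j) ^ (bcount Λ σ j) / (bcount Λ σ j).factorial

/-!
Both `P_Λ` and `exp H_Λ` are built from the unnormalized weight `∏_j (θ/j)^{b_j}/b_j!`, which
gives the first identity. Adding `v`, whose value occurs `m` times in `Λ`, moves one value from
the class of multiplicity `m` to that of multiplicity `m + 1` (for a new value, `m = 0` and only
`b_1` grows). Raising a single `b_a` by one multiplies the weight by `θ/(a(b_a+1))`, and
`Z_n/Z_{n+1} = (n+1)/(n+θ)`.
-/

noncomputable def ewensWeight (θ : ℝ) (N : ℕ) (b : ℕ → ℕ) : ℝ :=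
  ∏ j ∈ Icc 1 N, (θ / j) ^ b j / (b j).factorial

lemma ewensWeight_pos {θ : ℝ} (hθ : 0 < θ) (N : ℕ) (b : ℕ → ℕ) : 0 < ewensWeight θ N b :=
  prod_pos fun j hj => by
    have : (0 : ℝ) < j := by exact_mod_cast (mem_Icc.1 hj).1
    positivity

lemma ewensWeight_succ_of_eq_zero (θ : ℝ) {N : ℕ} {b : ℕ → ℕ} (hb : b (N + 1) = 0) :
    ewensWeight θ (N + 1) b = ewensWeight θ N b := by
  rw [ewensWeight, prod_Icc_succ_top (by omega), hb]
  simp [ewensWeight]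

lemma ewensWeight_eq_mul_of_eq_add_one (θ : ℝ) {N a : ℕ} {b b' : ℕ → ℕ} (ha : a ∈ Icc 1 N)
    (hb : ∀ j ∈ Icc 1 N, j ≠ a → b' j = b j) (hba : b' a = b a + 1) :
    ewensWeight θ N b' = ewensWeight θ N b * (θ / (a * (b a + 1))) := by
  rw [ewensWeight, ewensWeight, ← mul_prod_erase _ _ ha, ← mul_prod_erase _ _ ha,
    prod_congr rfl fun j hj => by rw [hb j (mem_of_mem_erase hj) (ne_of_mem_erase hj)], hba,
    pow_succ, Nat.factorial_succ]
  have : (a : ℝ) ≠ 0 := by exact_mod_cast (Nat.one_le_iff_ne_zero.1 (mem_Icc.1 ha).1)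
  push_cast
  field_simp

lemma Zc_succ (n : ℕ) (θ : ℝ) : Zc (n + 1) θ = Zc n θ * (θ + n) / (n + 1) := by
  rw [Zc, Zc, prod_range_succ, Nat.factorial_succ, Nat.cast_mul, Nat.cast_succ]
  field_simp

lemma Zc_pos (n : ℕ) {θ : ℝ} (hθ : 0 < θ) : 0 < Zc n θ :=
  div_pos (prod_pos fun k _ => by positivity) (by positivity)

lemma Zc_div_Zc_succ (n : ℕ) {θ : ℝ} (hθ : 0 < θ) :
    Zc n θ / Zc (n + 1) θ = (n + 1) / (n + θ) := by
  have := (Zc_pos n hθ).ne'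
  rw [Zc_succ]
  field_simp
  ring

section

variable {V : Type*} [DecidableEq V]

lemma bcount_eq_zero_of_card_lt (Λ : Finset V) (σ : V → ℤ) {j : ℕ} (hj : Λ.card < j) :
    bcount Λ σ j = 0 := by
  rw [bcount, card_eq_zero, filter_eq_empty_iff]
  intro z _ h
  have := h ▸ card_filter_le Λ fun x => σ x = z
  omega

lemma bcount_eq_sum_of_subset {Λ : Finset V} {σ : V → ℤ} {S : Finset ℤ}
    (hS : Λ.image σ ⊆ S) {j : ℕ} (hj : j ≠ 0) :
    bcount Λ σ j = ∑ z ∈ S, if (Λ.filter fun x => σ x = z).card = j then 1 else 0 := by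
  rw [bcount, ← card_filter]
  congr 1
  ext z
  simp only [mem_filter, and_congr_left_iff]
  intro hz
  refine ⟨fun h => hS h, fun _ => ?_⟩
  obtain ⟨x, hx⟩ := card_pos.1 (hz ▸ Nat.pos_of_ne_zero hj)
  exact mem_image.2 ⟨x, (mem_filter.1 hx).1, (mem_filter.1 hx).2⟩

lemma card_filter_insert_of_notMem {Λ : Finset V} {v : V} (hv : v ∉ Λ) (σ : V → ℤ) (z : ℤ) :
    ((insert v Λ).filter fun x => σ x = z).card
      = (Λ.filter fun x => σ x = z).card + if σ v = z then 1 else 0 := by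
  rw [filter_insert]
  split_ifs
  · exact card_insert_of_notMem fun h => hv (mem_filter.1 h).1
  · rfl

lemma bcount_insert_add {Λ : Finset V} {v : V} (hv : v ∉ Λ) (σ : V → ℤ) {j : ℕ} (hj : j ≠ 0) :
    bcount (insert v Λ) σ j + (if (Λ.filter fun x => σ x = σ v).card = j then 1 else 0)
      = bcount Λ σ j + if (Λ.filter fun x => σ x = σ v).card + 1 = j then 1 else 0 := by
  have hvS : σ v ∈ (insert v Λ).image σ := mem_image_of_mem σ (mem_insert_self v Λ)
  have hΛS : Λ.image σ ⊆ (insert v Λ).image σ := image_subset_image (subset_insert v Λ)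
  rw [bcount_eq_sum_of_subset subset_rfl hj, bcount_eq_sum_of_subset hΛS hj,
    ← sum_erase_add _ _ hvS, ← sum_erase_add _ _ hvS,
    sum_congr rfl fun z hz => by
      rw [card_filter_insert_of_notMem hv, if_neg (ne_of_mem_erase hz).symm, add_zero],
    card_filter_insert_of_notMem hv, if_pos rfl]
  omega

lemma bcount_insert_of_forall_ne {Λ : Finset V} {v : V} (hv : v ∉ Λ) {σ : V → ℤ}
    (hnew : ∀ x ∈ Λ, σ x ≠ σ v) {j : ℕ} (hj : j ≠ 0) :
    bcount (insert v Λ) σ j = bcount Λ σ j + if j = 1 then 1 else 0 := by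
  have h := bcount_insert_add hv σ hj
  rw [card_eq_zero.2 (filter_eq_empty_iff.2 hnew)] at h
  split_ifs at h ⊢ <;> omega

lemma Pmeas_eq_ewensWeight_div (θ : ℝ) (Λ : Finset V) (σ : V → ℤ) :
    Pmeas θ Λ σ = ewensWeight θ Λ.card (bcount Λ σ) / Zc Λ.card θ :=
  one_div_mul_eq_div _ _

lemma exp_ham_eq_ewensWeight {θ : ℝ} (hθ : 0 < θ) (Λ : Finset V) (σ : V → ℤ) :
    Real.exp (ham θ Λ σ) = ewensWeight θ Λ.card (bcount Λ σ) := by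
  rw [ham, Real.exp_sum]
  refine prod_congr rfl fun j hj => ?_
  have hj : (0 : ℝ) < j := by exact_mod_cast (mem_Icc.1 hj).1
  rw [Real.exp_sub, Real.exp_log (by positivity), ← Real.log_pow,
    Real.exp_log (pow_pos (div_pos hθ hj) _)]

lemma Pmeas_insert_div_Pmeas {θ : ℝ} (hθ : 0 < θ) {Λ : Finset V} {v : V} (hv : v ∉ Λ)
    (σ : V → ℤ) :
    Pmeas θ (insert v Λ) σ / Pmeas θ Λ σ = ((Λ.card + 1) / (Λ.card + θ)) *
      (ewensWeight θ (Λ.card + 1) (bcount (insert v Λ) σ) /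
        ewensWeight θ (Λ.card + 1) (bcount Λ σ)) := by
  rw [Pmeas_eq_ewensWeight_div, Pmeas_eq_ewensWeight_div, card_insert_of_notMem hv,
    ewensWeight_succ_of_eq_zero θ (bcount_eq_zero_of_card_lt Λ σ (Nat.lt_succ_self _)),
    ← Zc_div_Zc_succ _ hθ, div_div_div_comm, div_div_eq_mul_div]
  ring

lemma ewensWeight_bcount_insert_div_of_forall_ne {θ : ℝ} (hθ : 0 < θ) {Λ : Finset V} {v : V}
    (hv : v ∉ Λ) {σ : V → ℤ} (hnew : ∀ x ∈ Λ, σ x ≠ σ v) :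
    ewensWeight θ (Λ.card + 1) (bcount (insert v Λ) σ) /
        ewensWeight θ (Λ.card + 1) (bcount Λ σ) = θ / (bcount Λ σ 1 + 1) := by
  have hrel (j : ℕ) (hj : j ∈ Icc 1 (Λ.card + 1)) := bcount_insert_of_forall_ne hv hnew
    (Nat.one_le_iff_ne_zero.1 (mem_Icc.1 hj).1)
  rw [div_eq_iff (ewensWeight_pos hθ _ _).ne',
    ewensWeight_eq_mul_of_eq_add_one θ (a := 1) (b := bcount Λ σ) (b' := bcount (insert v Λ) σ)
      (by simp)
      (fun j hj hj1 => by rw [hrel j hj, if_neg hj1, add_zero])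
      (by rw [hrel 1 (by simp), if_pos rfl])]
  push_cast
  ring

lemma ewensWeight_bcount_insert_div_of_card_filter {θ : ℝ} (hθ : 0 < θ) {Λ : Finset V}
    {v : V} (hv : v ∉ Λ) {σ : V → ℤ} {i : ℕ} (hi : i ≠ 0)
    (hmult : (Λ.filter fun x => σ x = σ v).card = i) :
    ewensWeight θ (Λ.card + 1) (bcount (insert v Λ) σ) /
        ewensWeight θ (Λ.card + 1) (bcount Λ σ) =
      (i * bcount Λ σ i : ℝ) / ((i + 1) * (bcount Λ σ (i + 1) + 1)) := by
  have hiΛ : i ≤ Λ.card := hmult ▸ card_filter_le _ _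
  have hrel (j : ℕ) (hj : j ∈ Icc 1 (Λ.card + 1)) :=
    hmult ▸ bcount_insert_add hv σ (Nat.one_le_iff_ne_zero.1 (mem_Icc.1 hj).1)
  have hi_mem : i ∈ Icc 1 (Λ.card + 1) := mem_Icc.2 ⟨Nat.one_le_iff_ne_zero.2 hi, by omega⟩
  have hi_succ_mem : i + 1 ∈ Icc 1 (Λ.card + 1) := mem_Icc.2 ⟨by omega, by omega⟩
  have hbi : bcount (insert v Λ) σ i + 1 = bcount Λ σ i := by
    simpa using hrel i hi_mem
  have hbi_succ : bcount (insert v Λ) σ (i + 1) = bcount Λ σ (i + 1) + 1 := by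
    simpa using hrel (i + 1) hi_succ_mem
  -- the intermediate vector agrees with `b(Δ)` off `i` and with `b(Λ)` off `i + 1`
  set c := Function.update (bcount (insert v Λ) σ) i (bcount Λ σ i) with hc
  have hcΔ := ewensWeight_eq_mul_of_eq_add_one θ (b' := c) hi_mem
    (fun j _ hj => Function.update_of_ne hj _ _) (by rw [hc, Function.update_self, hbi])
  have hcΛ := ewensWeight_eq_mul_of_eq_add_one θ (b := bcount Λ σ) (b' := c) hi_succ_mem
    (fun j hj hj' => by
      by_cases hji : j = i
      · rw [hji, hc, Function.update_self]
      · have := hrel j hj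
        rw [if_neg (Ne.symm hji), if_neg (fun h => hj' h.symm), add_zero, add_zero] at this
        rw [hc, Function.update_of_ne hji, this])
    (by rw [hc, Function.update_of_ne (by omega), hbi_succ])
  have hbi' : (bcount (insert v Λ) σ i : ℝ) + 1 = bcount Λ σ i := by exact_mod_cast hbi
  rw [hcΔ, hbi'] at hcΛ
  have hbΛi : (bcount Λ σ i : ℝ) ≠ 0 := by rw [← hbi']; positivity
  have hi' : (i : ℝ) ≠ 0 := by exact_mod_cast hi
  rw [div_eq_div_iff (ewensWeight_pos hθ _ _).ne' (by positivity)]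
  push_cast at hcΛ
  field_simp at hcΛ
  linear_combination hcΛ

end

theorem ewens_ratio_general {V : Type*} [DecidableEq V] (θ : ℝ) (hθ : 0 < θ)
    (Λ : Finset V) (v : V) (hv : v ∉ Λ) (σ : V → ℤ) :
    Pmeas θ (insert v Λ) σ / Pmeas θ Λ σ =
      (Zc Λ.card θ / Zc (insert v Λ).card θ) *
        Real.exp (ham θ (insert v Λ) σ - ham θ Λ σ) ∧
    ((∀ x ∈ Λ, σ x ≠ σ v) →
      Pmeas θ (insert v Λ) σ / Pmeas θ Λ σ =
        ((Λ.card + 1) / (Λ.card + θ)) * (θ / (bcount Λ σ 1 + 1))) ∧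
    (∀ i₀ : ℕ, 1 ≤ i₀ → i₀ = (Λ.filter fun x => σ x = σ v).card →
      Pmeas θ (insert v Λ) σ / Pmeas θ Λ σ =
        ((Λ.card + 1) / (Λ.card + θ)) *
          ((i₀ * bcount Λ σ i₀ : ℝ) / ((i₀ + 1) * (bcount Λ σ (i₀ + 1) + 1)))) := by
  refine ⟨?_, fun hnew => ?_, fun i₀ hi₀ hmult => ?_⟩
  · rw [Pmeas_eq_ewensWeight_div, Pmeas_eq_ewensWeight_div, Real.exp_sub,
      exp_ham_eq_ewensWeight hθ, exp_ham_eq_ewensWeight hθ, div_div_div_comm,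
      div_div_eq_mul_div]
    ring
  · rw [Pmeas_insert_div_Pmeas hθ hv, ewensWeight_bcount_insert_div_of_forall_ne hθ hv hnew]
  · rw [Pmeas_insert_div_Pmeas hθ hv,
      ewensWeight_bcount_insert_div_of_card_filter hθ hv (by omega) hmult.symm]

/-- Ewens consistency via exponential difference: for `Δ = Λ ∪ {v}`,
`P_Δ(σ)/P_Λ(σ_Λ) = (Z_{|Λ|}(θ)/Z_{|Δ|}(θ))·exp(H_Δ(σ) − H_Λ(σ_Λ))`, and the ratio equals
`((|Λ|+1)/(|Λ|+θ))·r` with `r = θ/(b_1(σ_Λ)+1)` for a new value and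
`r = i₀ b_{i₀}(σ_Λ)/((i₀+1)(b_{i₀+1}(σ_Λ)+1))` for an existing value of multiplicity
`i₀ ≥ 1`. -/
theorem ewens_ratio {V : Type*} [DecidableEq V] (θ : ℝ) (hθ : 0 < θ)
    (Λ : Finset V) (v : V) (hv : v ∉ Λ) (σ : V → ℤ) (hP : 0 < Pmeas θ Λ σ) :
    Pmeas θ (insert v Λ) σ / Pmeas θ Λ σ =
      (Zc Λ.card θ / Zc (insert v Λ).card θ) *
        Real.exp (ham θ (insert v Λ) σ - ham θ Λ σ) ∧
    ((∀ x ∈ Λ, σ x ≠ σ v) →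
      Pmeas θ (insert v Λ) σ / Pmeas θ Λ σ =
        ((Λ.card + 1) / (Λ.card + θ)) * (θ / (bcount Λ σ 1 + 1))) ∧
    (∀ i₀ : ℕ, 1 ≤ i₀ → i₀ = (Λ.filter fun x => σ x = σ v).card →
      Pmeas θ (insert v Λ) σ / Pmeas θ Λ σ =
        ((Λ.card + 1) / (Λ.card + θ)) *
          ((i₀ * bcount Λ σ i₀ : ℝ) / ((i₀ + 1) * (bcount Λ σ (i₀ + 1) + 1)))) :=
  ewens_ratio_general θ hθ Λ v hv σ
end
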